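/- arXiv:2409.05830 — 5 statements merged into one kernel-verified Lean document; each statement's English description precedes it below -/
import Mathlib

section
/- Let d ≥ 2 and 1 ≤ p < d, and let λ : ℝ^d → ℝ be continuous and 2πℤ^d-periodic; let λ⁻ = min_{ℝ^d} λ and λ⁺ = max_{ℝ^d} λ (both attained, by continuity and periodicity). Then: (a) for every real p×d matrix T with T Tᵀ invertible, λ⁻ ≤ inf_{k ∈ S_T} λ(k) and sup_{k ∈ S_T} λ(k) ≤ λ⁺ (note 0 ∈ S_T, so S_T ≠ ∅); (b) for every ε > 0 there exists R > 0 such that for every integer p×d matrix T with T Tᵀ invertible and τ(T) ≥ R one has inf_{k ∈ S_T} λ(k) ≤ λ⁻ + ε and sup_{k ∈ S_T} λ(k) ≥ λ⁺ − ε. -/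
/-!
From any `x`, correcting `T x` to a nearest point of `2πℤ^p` costs a vector `w` with `|wᵢ| ≤ π`,
and the minimal-norm solution `v = Tᵀ (T Tᵀ)⁻¹ w` of `T v = w` has `τ(T)² ‖v‖² ≤ ‖w‖² ≤ p π²`
by the Rayleigh bound `λ_min(T Tᵀ) ‖u‖² ≤ u ⬝ T Tᵀ u` and Cauchy–Schwarz. So `S_T` is
`√p π / τ(T)`-dense in `ℝ^d`; once `τ(T)` is large it meets the neighbourhoods of a minimiser and a
maximiser of `λ` on which `λ` is within `ε` of its extreme values.
-/

open Matrix
open scoped Real BigOperators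

/-- Euclidean norm of a vector in `ℝ^n`. -/
noncomputable def euclNorm {n : ℕ} (x : Fin n → ℝ) : ℝ := Real.sqrt (∑ i, (x i)^2)

open scoped Classical in
/-- Smallest eigenvalue of a (Hermitian) real matrix. -/
noncomputable def matLamMin {n : ℕ} (A : Matrix (Fin n) (Fin n) ℝ) : ℝ :=
  if h : A.IsHermitian then ⨅ i, h.eigenvalues i else 0

/-- `τ(T)`: square root of the smallest eigenvalue of `T * Tᵀ`. -/
noncomputable def matTau {p d : ℕ} (T : Matrix (Fin p) (Fin d) ℝ) : ℝ :=
  Real.sqrt (matLamMin (T * Tᵀ))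

open scoped Classical in
/-- `A^{-1/2}`: the inverse of the positive (semi)definite square root of `A`. -/
noncomputable def matInvSqrt {n : ℕ} (A : Matrix (Fin n) (Fin n) ℝ) : Matrix (Fin n) (Fin n) ℝ :=
  if h : A.PosSemidef then ((h.1.eigenvectorUnitary : Matrix (Fin n) (Fin n) ℝ) *
    diagonal ((↑) ∘ (√·) ∘ h.1.eigenvalues) * (star (h.1.eigenvectorUnitary : Matrix (Fin n) (Fin n) ℝ)))⁻¹ else 0

/-- The representative of `x` in `(-π, π]` modulo `2πℤ`. -/
noncomputable def repPi (x : ℝ) : ℝ := x - 2*Real.pi*(⌈(x - Real.pi)/(2*Real.pi)⌉ : ℤ)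

open Topology

lemma matLamMin_le_eigenvalues {n : ℕ} {M : Matrix (Fin n) (Fin n) ℝ} (hM : M.IsHermitian)
    (i : Fin n) : matLamMin M ≤ hM.eigenvalues i := by
  rw [matLamMin, dif_pos hM]
  exact ciInf_le (Set.finite_range _).bddBelow i

lemma posSemidef_sub_matLamMin {n : ℕ} {M : Matrix (Fin n) (Fin n) ℝ} (hM : M.IsHermitian) :
    (M - algebraMap ℝ _ (matLamMin M)).PosSemidef := by
  refine posSemidef_iff_isHermitian_and_spectrum_nonneg.2
    ⟨hM.sub (by simp [algebraMap_eq_diagonal]), ?_⟩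
  rw [← spectrum.sub_singleton_eq, hM.spectrum_real_eq_range_eigenvalues]
  rintro _ ⟨_, ⟨i, rfl⟩, _, rfl, rfl⟩
  exact sub_nonneg.2 (matLamMin_le_eigenvalues hM i)

lemma matLamMin_mul_dotProduct_le {n : ℕ} {M : Matrix (Fin n) (Fin n) ℝ} (hM : M.IsHermitian)
    (x : Fin n → ℝ) : matLamMin M * (x ⬝ᵥ x) ≤ x ⬝ᵥ (M *ᵥ x) := by
  have := (posSemidef_sub_matLamMin hM).dotProduct_mulVec_nonneg x
  simpa only [star_trivial, Algebra.algebraMap_eq_smul_one, sub_mulVec, smul_mulVec, one_mulVec,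
    dotProduct_sub, dotProduct_smul, smul_eq_mul, sub_nonneg] using this

lemma sq_dotProduct_le {ι : Type*} [Fintype ι] (u w : ι → ℝ) : (u ⬝ᵥ w) ^ 2 ≤ (u ⬝ᵥ u) * (w ⬝ᵥ w) := by
  simpa only [dotProduct, sq] using Finset.sum_mul_sq_le_sq_mul_sq Finset.univ u w

lemma exists_mulVec_eq_matLamMin_mul_dotProduct_le {p d : ℕ} (A : Matrix (Fin p) (Fin d) ℝ)
    (hA : IsUnit (A * Aᵀ)) (w : Fin p → ℝ) :
    ∃ v, A *ᵥ v = w ∧ matLamMin (A * Aᵀ) * (v ⬝ᵥ v) ≤ w ⬝ᵥ w := by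
  set M := A * Aᵀ
  set u := M⁻¹ *ᵥ w
  have hMu : M *ᵥ u = w := by
    rw [mulVec_mulVec, mul_nonsing_inv _ ((isUnit_iff_isUnit_det _).1 hA), one_mulVec]
  refine ⟨Aᵀ *ᵥ u, by rw [mulVec_mulVec, hMu], ?_⟩
  have hvv : (Aᵀ *ᵥ u) ⬝ᵥ (Aᵀ *ᵥ u) = u ⬝ᵥ w := by
    rw [dotProduct_mulVec, vecMul_transpose, mulVec_mulVec, hMu, dotProduct_comm]
  have hray : matLamMin M * (u ⬝ᵥ u) ≤ u ⬝ᵥ w := by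
    have hM : M.IsHermitian := by simpa using isHermitian_mul_conjTranspose_self A
    simpa only [hMu] using matLamMin_mul_dotProduct_le hM u
  have hcs := sq_dotProduct_le u w
  have hW : 0 ≤ w ⬝ᵥ w := dotProduct_self_star_nonneg w
  have hs : 0 ≤ u ⬝ᵥ w := hvv ▸ dotProduct_self_star_nonneg _
  rw [hvv]
  rcases le_or_gt (matLamMin M) 0 with hneg | hpos
  · exact (mul_nonpos_of_nonpos_of_nonneg hneg hs).trans hW
  rcases hs.eq_or_lt with h0 | h0
  · rw [← h0, mul_zero]; exact hW
  -- Cauchy–Schwarz and the Rayleigh bound give `λ s² ≤ λ ‖u‖² ‖w‖² ≤ s ‖w‖²` for `s = u ⬝ᵥ w`.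
  refine le_of_mul_le_mul_left ?_ h0
  nlinarith [mul_le_mul_of_nonneg_left hcs hpos.le, mul_le_mul_of_nonneg_right hray hW]

lemma abs_two_pi_mul_round_sub_le (x : ℝ) : |2 * π * round (x / (2 * π)) - x| ≤ π := by
  have h2π : (0 : ℝ) < 2 * π := by positivity
  have : 2 * π * round (x / (2 * π)) - x = -(2 * π * (x / (2 * π) - round (x / (2 * π)))) := by
    field_simp
    ring
  rw [this, abs_neg, abs_mul, abs_of_pos h2π]
  linarith [mul_le_mul_of_nonneg_left (abs_sub_round (x / (2 * π))) h2π.le]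

lemma norm_le_sqrt_dotProduct_self {ι : Type*} [Fintype ι] (v : ι → ℝ) : ‖v‖ ≤ √(v ⬝ᵥ v) := by
  refine (pi_norm_le_iff_of_nonneg (Real.sqrt_nonneg _)).2 fun i => Real.abs_le_sqrt ?_
  rw [sq]
  exact Finset.single_le_sum (f := fun j => v j * v j) (fun j _ => mul_self_nonneg _)
    (Finset.mem_univ i)

-- The set `S_T` of the paper.
def latticePreimage {p d : ℕ} (T : Matrix (Fin p) (Fin d) ℝ) : Set (Fin d → ℝ) :=
  {k | ∀ i, ∃ n : ℤ, (T *ᵥ k) i = 2 * π * n}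

lemma zero_mem_latticePreimage {p d : ℕ} (T : Matrix (Fin p) (Fin d) ℝ) :
    0 ∈ latticePreimage T :=
  fun _ => ⟨0, by simp⟩

lemma exists_mem_latticePreimage_matTau_mul_dist_le {p d : ℕ} (A : Matrix (Fin p) (Fin d) ℝ)
    (hA : IsUnit (A * Aᵀ)) (x : Fin d → ℝ) :
    ∃ k ∈ latticePreimage A, matTau A * dist k x ≤ √p * π := by
  set n : Fin p → ℤ := fun i => round ((A *ᵥ x) i / (2 * π))
  set w : Fin p → ℝ := fun i => 2 * π * n i - (A *ᵥ x) i
  have hww : w ⬝ᵥ w ≤ p * π ^ 2 := by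
    calc w ⬝ᵥ w = ∑ i, |w i| * |w i| := by simp only [dotProduct, abs_mul_abs_self]
      _ ≤ ∑ _i : Fin p, π ^ 2 := Finset.sum_le_sum fun i _ => by
        rw [sq]
        exact mul_self_le_mul_self (abs_nonneg _) (abs_two_pi_mul_round_sub_le _)
      _ = p * π ^ 2 := by simp
  obtain ⟨v, hAv, hv⟩ := exists_mulVec_eq_matLamMin_mul_dotProduct_le A hA w
  refine ⟨x + v, fun i => ⟨n i, by simp [mulVec_add, hAv, w]⟩, ?_⟩
  rw [dist_self_add_left]
  calc matTau A * ‖v‖ ≤ √(matLamMin (A * Aᵀ)) * √(v ⬝ᵥ v) :=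
        mul_le_mul_of_nonneg_left (norm_le_sqrt_dotProduct_self v) (Real.sqrt_nonneg _)
    _ = √(matLamMin (A * Aᵀ) * (v ⬝ᵥ v)) := (Real.sqrt_mul' _ (dotProduct_self_star_nonneg v)).symm
    _ ≤ √(p * π ^ 2) := Real.sqrt_le_sqrt (hv.trans hww)
    _ = √p * π := by rw [Real.sqrt_mul (Nat.cast_nonneg _), Real.sqrt_sq Real.pi_pos.le]

lemma exists_pos_forall_latticePreimage_inter_nonempty {p d : ℕ} {x : Fin d → ℝ}
    {U : Set (Fin d → ℝ)} (hU : U ∈ 𝓝 x) :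
    ∃ R > 0, ∀ A : Matrix (Fin p) (Fin d) ℝ, IsUnit (A * Aᵀ) → R ≤ matTau A →
      (latticePreimage A ∩ U).Nonempty := by
  obtain ⟨η, hη, hball⟩ := Metric.mem_nhds_iff.1 hU
  have hR : 0 < (√p * π + 1) / η := by positivity
  refine ⟨_, hR, fun A hA hτ => ?_⟩
  obtain ⟨k, hk, hkx⟩ := exists_mem_latticePreimage_matTau_mul_dist_le A hA x
  refine ⟨k, hk, hball (Metric.mem_ball.2 (lt_of_mul_lt_mul_right ?_ hR.le))⟩
  calc dist k x * ((√p * π + 1) / η) ≤ matTau A * dist k x := by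
        rw [mul_comm]; exact mul_le_mul_of_nonneg_right hτ dist_nonneg
    _ < √p * π + 1 := by linarith
    _ = η * ((√p * π + 1) / η) := by field_simp

theorem stmt_2_general (d p : ℕ)
    (lam : (Fin d → ℝ) → ℝ) (hcont : Continuous lam)
    (lamlo lamhi : ℝ)
    (hlo : IsLeast (Set.range lam) lamlo) (hhi : IsGreatest (Set.range lam) lamhi) :
    (∀ T : Matrix (Fin p) (Fin d) ℝ, IsUnit (T * Tᵀ) →
      lamlo ≤ sInf (lam '' {k | ∀ i, ∃ n : ℤ, (T *ᵥ k) i = 2*π*n}) ∧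
      sSup (lam '' {k | ∀ i, ∃ n : ℤ, (T *ᵥ k) i = 2*π*n}) ≤ lamhi) ∧
    (∀ ε > (0:ℝ), ∃ R > (0:ℝ), ∀ T : Matrix (Fin p) (Fin d) ℤ,
      IsUnit (T.map (Int.cast : ℤ → ℝ) * (T.map (Int.cast : ℤ → ℝ))ᵀ) →
      R ≤ matTau (T.map (Int.cast : ℤ → ℝ)) →
      sInf (lam '' {k | ∀ i, ∃ n : ℤ, (T.map (Int.cast : ℤ → ℝ) *ᵥ k) i = 2*π*n}) ≤ lamlo + ε ∧
      lamhi - ε ≤ sSup (lam '' {k | ∀ i, ∃ n : ℤ, (T.map (Int.cast : ℤ → ℝ) *ᵥ k) i = 2*π*n})) := by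
  have hbdd (S : Set (Fin d → ℝ)) : BddBelow (lam '' S) ∧ BddAbove (lam '' S) :=
    ⟨hlo.bddBelow.mono (Set.image_subset_range _ _), hhi.bddAbove.mono (Set.image_subset_range _ _)⟩
  refine ⟨fun T _ => ?_, fun ε hε => ?_⟩
  · have hne : (lam '' latticePreimage T).Nonempty :=
      ⟨_, Set.mem_image_of_mem lam (zero_mem_latticePreimage T)⟩
    exact ⟨le_csInf hne (Set.forall_mem_image.2 fun k _ => hlo.2 ⟨k, rfl⟩),
      csSup_le hne (Set.forall_mem_image.2 fun k _ => hhi.2 ⟨k, rfl⟩)⟩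
  obtain ⟨kmin, rfl⟩ := hlo.1
  obtain ⟨kmax, rfl⟩ := hhi.1
  obtain ⟨R₁, hR₁, hnear₁⟩ := exists_pos_forall_latticePreimage_inter_nonempty (p := p)
    (hcont.continuousAt.preimage_mem_nhds (Iio_mem_nhds (lt_add_of_pos_right (lam kmin) hε)))
  obtain ⟨R₂, -, hnear₂⟩ := exists_pos_forall_latticePreimage_inter_nonempty (p := p)
    (hcont.continuousAt.preimage_mem_nhds (Ioi_mem_nhds (sub_lt_self (lam kmax) hε)))
  refine ⟨max R₁ R₂, lt_max_of_lt_left hR₁, fun T hT hτ => ?_⟩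
  obtain ⟨k₁, hk₁, hlt₁⟩ := hnear₁ _ hT ((le_max_left _ _).trans hτ)
  obtain ⟨k₂, hk₂, hlt₂⟩ := hnear₂ _ hT ((le_max_right _ _).trans hτ)
  exact ⟨csInf_le_of_le (hbdd _).1 (Set.mem_image_of_mem lam hk₁) hlt₁.le,
    le_csSup_of_le (hbdd _).2 (Set.mem_image_of_mem lam hk₂) hlt₂.le⟩

/-- for a continuous `2πℤ^d`-periodic function `λ` with attained min `λ⁻` and
max `λ⁺`: (a) the inf/sup of `λ` over `S_T` lie between `λ⁻` and `λ⁺`; (b) as `τ(T) → ∞`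
over integer matrices `T`, these inf/sup approach `λ⁻` and `λ⁺`. -/
theorem stmt_2 (d p : ℕ) (hd : 2 ≤ d) (hp : 1 ≤ p) (hpd : p < d)
    (lam : (Fin d → ℝ) → ℝ) (hcont : Continuous lam)
    (hper : ∀ (k : Fin d → ℝ) (n : Fin d → ℤ), lam (k + fun i => 2*π*(n i : ℝ)) = lam k)
    (lamlo lamhi : ℝ)
    (hlo : IsLeast (Set.range lam) lamlo) (hhi : IsGreatest (Set.range lam) lamhi) :
    (∀ T : Matrix (Fin p) (Fin d) ℝ, IsUnit (T * Tᵀ) →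
      lamlo ≤ sInf (lam '' {k | ∀ i, ∃ n : ℤ, (T *ᵥ k) i = 2*π*n}) ∧
      sSup (lam '' {k | ∀ i, ∃ n : ℤ, (T *ᵥ k) i = 2*π*n}) ≤ lamhi) ∧
    (∀ ε > (0:ℝ), ∃ R > (0:ℝ), ∀ T : Matrix (Fin p) (Fin d) ℤ,
      IsUnit (T.map (Int.cast : ℤ → ℝ) * (T.map (Int.cast : ℤ → ℝ))ᵀ) →
      R ≤ matTau (T.map (Int.cast : ℤ → ℝ)) →
      sInf (lam '' {k | ∀ i, ∃ n : ℤ, (T.map (Int.cast : ℤ → ℝ) *ᵥ k) i = 2*π*n}) ≤ lamlo + ε ∧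
      lamhi - ε ≤ sSup (lam '' {k | ∀ i, ∃ n : ℤ, (T.map (Int.cast : ℤ → ℝ) *ᵥ k) i = 2*π*n})) :=
  stmt_2_general d p lam hcont lamlo lamhi hlo hhi
end

section
/- Let q > 0 be real and let H_q(k), for k ∈ ℝ², be the 2×2 complex matrix with entries H₁₁ = 3+q, H₁₂ = −1−e^{ik₁}−e^{ik₂}, H₂₁ = −1−e^{−ik₁}−e^{−ik₂}, H₂₂ = 3−q. Then the union ⋃_{k ∈ (−π,π]²} spectrum(H_q(k)) equals [3−√(9+q²), 3−q] ∪ [3+q, 3+√(9+q²)] (real closed intervals regarded as subsets of ℂ). -/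
open scoped Real

/-- The Floquet matrix of the Schrödinger operator on the hexagonal lattice with
potential `±q` on the two fundamental vertices. -/
noncomputable def hexFloquet (q k₁ k₂ : ℝ) : Matrix (Fin 2) (Fin 2) ℂ :=
  !![((3 + q : ℝ) : ℂ), -1 - Complex.exp (Complex.I * k₁) - Complex.exp (Complex.I * k₂);
     -1 - Complex.exp (-(Complex.I * k₁)) - Complex.exp (-(Complex.I * k₂)), ((3 - q : ℝ) : ℂ)]

/-! Writing `w(k) = 1 + e^{ik₁} + e^{ik₂}`, the off-diagonal entries of `H_q(k)` are `-w` and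
`-conj w`, so its eigenvalues are the roots of `(μ - 3)² = q² + |w(k)|²`. On the Brillouin zone
`|w|` takes exactly the values in `[0, 3]`: the bound is the triangle inequality, and along the
diagonal `k = (θ, -θ)` one has `w = 1 + 2 cos θ`. Hence the spectrum is `3 ± √(q² + r²)`,
`0 ≤ r ≤ 3`, which sweeps out the two bands. -/

theorem Matrix.mem_spectrum_fin_two_iff {K : Type*} [Field K] (A : Matrix (Fin 2) (Fin 2) K)
    (μ : K) : μ ∈ spectrum K A ↔ (μ - A 0 0) * (μ - A 1 1) = A 0 1 * A 1 0 := by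
  rw [spectrum.mem_iff, Matrix.isUnit_iff_isUnit_det, isUnit_iff_ne_zero, not_not,
    Matrix.det_fin_two, sub_eq_zero]
  simp [Matrix.algebraMap_matrix_apply]

open Complex ComplexConjugate

noncomputable def hexSymbol (k₁ k₂ : ℝ) : ℂ := 1 + exp (I * k₁) + exp (I * k₂)

theorem mem_spectrum_hexFloquet_iff (q k₁ k₂ : ℝ) (μ : ℂ) :
    μ ∈ spectrum ℂ (hexFloquet q k₁ k₂) ↔
      (μ - 3) ^ 2 = (q : ℂ) ^ 2 + (‖hexSymbol k₁ k₂‖ : ℂ) ^ 2 := by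
  have hconj : ∀ k : ℝ, exp (-(I * k)) = conj (exp (I * k)) := fun k => by
    rw [← exp_conj, map_mul, conj_I, conj_ofReal, neg_mul]
  have hoff : hexFloquet q k₁ k₂ 0 1 * hexFloquet q k₁ k₂ 1 0 =
      hexSymbol k₁ k₂ * conj (hexSymbol k₁ k₂) := by
    simp only [hexFloquet, hexSymbol, Matrix.of_apply, Matrix.cons_val', Matrix.cons_val_zero,
      Matrix.cons_val_one, Matrix.empty_val', Matrix.cons_val_fin_one, hconj, map_add, map_one]
    ring
  rw [Matrix.mem_spectrum_fin_two_iff, hoff, mul_conj']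
  simp only [hexFloquet, Matrix.of_apply, Matrix.cons_val', Matrix.cons_val_zero,
      Matrix.cons_val_one, Matrix.empty_val', Matrix.cons_val_fin_one]
  push_cast
  constructor <;> intro h <;> linear_combination h

theorem norm_hexSymbol_le_three (k₁ k₂ : ℝ) : ‖hexSymbol k₁ k₂‖ ≤ 3 := by
  have hunit : ∀ k : ℝ, ‖exp (I * k)‖ = 1 := fun k => by
    rw [mul_comm]; exact norm_exp_ofReal_mul_I k
  calc ‖hexSymbol k₁ k₂‖ ≤ ‖(1 : ℂ)‖ + ‖exp (I * k₁)‖ + ‖exp (I * k₂)‖ := norm_add₃_le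
    _ = 3 := by rw [hunit, hunit, norm_one]; norm_num

theorem hexSymbol_self_neg (θ : ℝ) : hexSymbol θ (-θ) = 1 + 2 * Real.cos θ := by
  rw [hexSymbol, mul_comm, ofReal_neg, mul_comm I, exp_mul_I, exp_mul_I, cos_neg, sin_neg]
  push_cast
  ring

theorem exists_hexSymbol_eq {r : ℝ} (hr : r ∈ Set.Icc 0 3) :
    ∃ k₁ ∈ Set.Ioc (-π) π, ∃ k₂ ∈ Set.Ioc (-π) π, hexSymbol k₁ k₂ = r := by
  obtain ⟨hr0, hr3⟩ := hr
  set θ := Real.arccos ((r - 1) / 2)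
  have hθ0 : 0 ≤ θ := Real.arccos_nonneg _
  have hθπ : θ < π := Real.arccos_lt_pi.2 (by linarith)
  refine ⟨θ, ⟨by linarith, Real.arccos_le_pi _⟩, -θ, ⟨by linarith, by linarith⟩, ?_⟩
  rw [hexSymbol_self_neg, Real.cos_arccos (by linarith) (by linarith)]
  push_cast
  ring

theorem setOf_sub_sq_eq_add_sq {c q ρ : ℝ} (hq : 0 ≤ q) (hρ : 0 ≤ ρ) :
    {μ : ℂ | ∃ r ∈ Set.Icc 0 ρ, (μ - c) ^ 2 = (q : ℂ) ^ 2 + (r : ℂ) ^ 2} =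
      (fun x : ℝ => (x : ℂ)) ''
        (Set.Icc (c - √(q ^ 2 + ρ ^ 2)) (c - q) ∪ Set.Icc (c + q) (c + √(q ^ 2 + ρ ^ 2))) := by
  ext μ
  constructor
  · rintro ⟨r, ⟨hr0, hrρ⟩, h⟩
    set d := √(q ^ 2 + r ^ 2)
    have hqd : q ≤ d := Real.le_sqrt_of_sq_le (by nlinarith)
    have hdR : d ≤ √(q ^ 2 + ρ ^ 2) := Real.sqrt_le_sqrt (by nlinarith)
    have hd2 : d ^ 2 = q ^ 2 + r ^ 2 := Real.sq_sqrt (by positivity)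
    have hd : (μ - c) ^ 2 = (d : ℂ) ^ 2 := by rw [h]; exact_mod_cast hd2.symm
    rcases sq_eq_sq_iff_eq_or_eq_neg.1 hd with h | h
    · exact ⟨c + d, Or.inr ⟨by linarith, by linarith⟩, by push_cast; linear_combination -h⟩
    · exact ⟨c - d, Or.inl ⟨by linarith, by linarith⟩, by push_cast; linear_combination -h⟩
  · rintro ⟨x, hx, rfl⟩
    have hR : √(q ^ 2 + ρ ^ 2) ^ 2 = q ^ 2 + ρ ^ 2 := Real.sq_sqrt (by positivity)
    have hgap : q ^ 2 ≤ (x - c) ^ 2 ∧ (x - c) ^ 2 ≤ q ^ 2 + ρ ^ 2 := by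
      rcases hx with ⟨h₁, h₂⟩ | ⟨h₁, h₂⟩ <;> constructor <;> nlinarith
    have hr2 : √((x - c) ^ 2 - q ^ 2) ^ 2 = (x - c) ^ 2 - q ^ 2 := Real.sq_sqrt (by linarith)
    refine ⟨√((x - c) ^ 2 - q ^ 2), ⟨Real.sqrt_nonneg _, ?_⟩, ?_⟩
    · exact (Real.sqrt_le_left hρ).2 (by linarith)
    · dsimp only
      exact_mod_cast (by linarith : (x - c) ^ 2 = q ^ 2 + √((x - c) ^ 2 - q ^ 2) ^ 2)

theorem iUnion_spectrum_hexFloquet (q : ℝ) :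
    ⋃ k₁ ∈ Set.Ioc (-π) π, ⋃ k₂ ∈ Set.Ioc (-π) π, spectrum ℂ (hexFloquet q k₁ k₂) =
      {μ : ℂ | ∃ r ∈ Set.Icc (0 : ℝ) 3, (μ - (3 : ℝ)) ^ 2 = (q : ℂ) ^ 2 + (r : ℂ) ^ 2} := by
  ext μ
  simp only [Set.mem_iUnion, exists_prop, mem_spectrum_hexFloquet_iff, Set.mem_ofPred_eq,
    ofReal_ofNat]
  constructor
  · rintro ⟨k₁, -, k₂, -, h⟩
    exact ⟨_, ⟨norm_nonneg _, norm_hexSymbol_le_three k₁ k₂⟩, h⟩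
  · rintro ⟨r, hr, h⟩
    obtain ⟨k₁, hk₁, k₂, hk₂, hw⟩ := exists_hexSymbol_eq hr
    refine ⟨k₁, hk₁, k₂, hk₂, ?_⟩
    rwa [hw, norm_real, Real.norm_of_nonneg hr.1]

/-- the union of the spectra of `H_q(k)` over the Brillouin zone `(−π,π]²`
equals `[3−√(9+q²), 3−q] ∪ [3+q, 3+√(9+q²)]`. -/
theorem stmt_11 (q : ℝ) (hq : 0 < q) :
    (⋃ k₁ ∈ Set.Ioc (-π) π, ⋃ k₂ ∈ Set.Ioc (-π) π, spectrum ℂ (hexFloquet q k₁ k₂)) =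
      (fun x : ℝ => (x : ℂ)) ''
        (Set.Icc (3 - Real.sqrt (9 + q^2)) (3 - q) ∪
         Set.Icc (3 + q) (3 + Real.sqrt (9 + q^2))) := by
  rw [iUnion_spectrum_hexFloquet, setOf_sub_sq_eq_add_sq hq.le (by norm_num : (0 : ℝ) ≤ 3)]
  norm_num [add_comm]
end

section
/- For (k₁,k₂,k₃) ∈ (−π,π]³, the equality 1 + e^{ik₁} + e^{ik₂} + e^{ik₃} = 0 holds if and only if there exist pairwise distinct indices i, j, l ∈ {1,2,3} such that k_l = π and k_i − k_j ∈ {π, −π}. -/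
open scoped Real BigOperators

lemma aux_exp_neg_one {t : ℝ} (h : Complex.exp (Complex.I * t) = -1) :
    ∃ n : ℤ, t = π + 2 * π * n := by
  rw [← Complex.exp_pi_mul_I, Complex.exp_eq_exp_iff_exists_int] at h
  obtain ⟨n, hn⟩ := h
  refine ⟨n, ?_⟩
  have : (Complex.I : ℂ) * t = Complex.I * (π + 2*π*n) := by
    rw [hn]; ring
  have h2 := mul_left_cancel₀ Complex.I_ne_zero this
  exact_mod_cast h2

lemma aux_neg_one_exp {t : ℝ} (h : ∃ n : ℤ, t = π + 2 * π * n) :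
    Complex.exp (Complex.I * t) = -1 := by
  obtain ⟨n, hn⟩ := h
  subst hn
  push_cast
  rw [show Complex.I * (π + 2*π*n) = π * Complex.I + n * (2*π*Complex.I) by ring,
    Complex.exp_add, Complex.exp_int_mul_two_pi_mul_I, Complex.exp_pi_mul_I, mul_one]

-- x ∈ (-π,π], exp(I x) = -1 → x = π
lemma aux_eq_pi {x : ℝ} (hx : x ∈ Set.Ioc (-π) π)
    (h : Complex.exp (Complex.I * x) = -1) : x = π := by
  obtain ⟨n, hn⟩ := aux_exp_neg_one h
  have hpi := Real.pi_pos
  have hn0 : n = 0 := by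
    rcases lt_trichotomy n 0 with h' | h' | h'
    · exfalso
      have : (n : ℝ) ≤ -1 := by exact_mod_cast (by omega : n ≤ -1)
      nlinarith [hx.1]
    · exact h'
    · exfalso
      have : (1 : ℝ) ≤ n := by exact_mod_cast h'
      nlinarith [hx.2]
  simp [hn0] at hn
  linarith [hn]

-- sum of two antipodal exps
lemma aux_sum_zero {x y : ℝ} (h : x - y = π ∨ x - y = -π) :
    Complex.exp (Complex.I * x) + Complex.exp (Complex.I * y) = 0 := by
  have hx : Complex.exp (Complex.I * x) = Complex.exp (Complex.I * (x - y)) * Complex.exp (Complex.I * y) := by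
    rw [← Complex.exp_add]; ring_nf
  have hneg : Complex.exp (Complex.I * (↑(x - y) : ℝ)) = -1 := by
    rcases h with h | h
    · exact aux_neg_one_exp ⟨0, by rw [h]; ring⟩
    · exact aux_neg_one_exp ⟨-1, by rw [h]; push_cast; ring⟩
  push_cast at hneg
  rw [hx, hneg]
  ring

lemma aux_diff {x y : ℝ} (hx : x ∈ Set.Ioc (-π) π) (hy : y ∈ Set.Ioc (-π) π)
    (h : Complex.exp (Complex.I * x) + Complex.exp (Complex.I * y) = 0) :
    x - y = π ∨ x - y = -π := by
  have hy0 := Complex.exp_ne_zero (Complex.I * y)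
  have hq : Complex.exp (Complex.I * (↑(x - y) : ℝ)) = -1 := by
    push_cast
    rw [show Complex.I * ((x:ℂ) - y) = Complex.I * x + -(Complex.I * y) by ring,
      Complex.exp_add, Complex.exp_neg]
    field_simp
    linear_combination h
  obtain ⟨n, hn⟩ := aux_exp_neg_one hq
  have hpi := Real.pi_pos
  have hb1 : -(2*π) < x - y := by linarith [hx.1, hy.2]
  have hb2 : x - y < 2*π := by linarith [hx.2, hy.1]
  rcases lt_trichotomy n 0 with h' | h' | h'
  · right
    have hn1 : n = -1 := by
      by_contra hc
      have : (n : ℝ) ≤ -2 := by exact_mod_cast (by omega : n ≤ -2)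
      nlinarith
    rw [hn1] at hn; push_cast at hn; linarith
  · left; rw [h'] at hn; push_cast at hn; linarith
  · exfalso
    have : (1 : ℝ) ≤ n := by exact_mod_cast h'
    nlinarith

/-- for `k ∈ (−π,π]³`, `1 + e^{ik₁} + e^{ik₂} + e^{ik₃} = 0` iff there are
pairwise distinct indices `i, j, l` with `k l = π` and `k i − k j = ±π`. -/
theorem stmt_17 (k : Fin 3 → ℝ) (hk : ∀ m, k m ∈ Set.Ioc (-π) π) :
    (1 + ∑ m, Complex.exp (Complex.I * k m) = 0) ↔
      ∃ i j l : Fin 3, i ≠ j ∧ i ≠ l ∧ j ≠ l ∧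
        k l = π ∧ (k i - k j = π ∨ k i - k j = -π) := by
  rw [Fin.sum_univ_three]
  constructor
  · intro h
    have hconj : 1 + Complex.exp (-(Complex.I * k 0)) + Complex.exp (-(Complex.I * k 1))
        + Complex.exp (-(Complex.I * k 2)) = 0 := by
      have h2 := congrArg (starRingEnd ℂ) h
      simpa [← Complex.exp_conj, map_mul, Complex.conj_I, Complex.conj_ofReal,
        add_assoc, neg_mul] using h2
    have ha : Complex.exp (Complex.I * k 0) * Complex.exp (-(Complex.I * k 0)) = 1 := by
      rw [← Complex.exp_add]; simp
    have hb : Complex.exp (Complex.I * k 1) * Complex.exp (-(Complex.I * k 1)) = 1 := by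
      rw [← Complex.exp_add]; simp
    have hc : Complex.exp (Complex.I * k 2) * Complex.exp (-(Complex.I * k 2)) = 1 := by
      rw [← Complex.exp_add]; simp
    have hfac : (1 + Complex.exp (Complex.I * k 0)) * (1 + Complex.exp (Complex.I * k 1))
        * (1 + Complex.exp (Complex.I * k 2)) = 0 := by
      linear_combination h + Complex.exp (Complex.I * k 0) * Complex.exp (Complex.I * k 1)
          * Complex.exp (Complex.I * k 2) * hconj
        - Complex.exp (Complex.I * k 1) * Complex.exp (Complex.I * k 2) * ha
        - Complex.exp (Complex.I * k 0) * Complex.exp (Complex.I * k 2) * hb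
        - Complex.exp (Complex.I * k 0) * Complex.exp (Complex.I * k 1) * hc
    rcases mul_eq_zero.1 hfac with hfac' | h0
    · rcases mul_eq_zero.1 hfac' with h0 | h0
      · have hl : k 0 = π := aux_eq_pi (hk 0) (by linear_combination h0)
        have hs : Complex.exp (Complex.I * k 1) + Complex.exp (Complex.I * k 2) = 0 := by
          linear_combination h - h0
        exact ⟨1, 2, 0, by decide, by decide, by decide, hl, aux_diff (hk 1) (hk 2) hs⟩
      · have hl : k 1 = π := aux_eq_pi (hk 1) (by linear_combination h0)
        have hs : Complex.exp (Complex.I * k 0) + Complex.exp (Complex.I * k 2) = 0 := by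
          linear_combination h - h0
        exact ⟨0, 2, 1, by decide, by decide, by decide, hl, aux_diff (hk 0) (hk 2) hs⟩
    · have hl : k 2 = π := aux_eq_pi (hk 2) (by linear_combination h0)
      have hs : Complex.exp (Complex.I * k 0) + Complex.exp (Complex.I * k 1) = 0 := by
        linear_combination h - h0
      exact ⟨0, 1, 2, by decide, by decide, by decide, hl, aux_diff (hk 0) (hk 1) hs⟩
  · rintro ⟨i, j, l, hij, hil, hjl, hl, hd⟩
    have hl' : Complex.exp (Complex.I * k l) = -1 := by
      rw [hl]; exact aux_neg_one_exp ⟨0, by norm_num⟩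
    have hs := aux_sum_zero hd
    fin_cases i <;> fin_cases j <;> fin_cases l <;>
      first
        | exact absurd rfl hij
        | exact absurd rfl hil
        | exact absurd rfl hjl
        | (simp only [Fin.isValue, show ((⟨0, by omega⟩ : Fin 3)) = 0 from rfl, show ((⟨1, by omega⟩ : Fin 3)) = 1 from rfl, show ((⟨2, by omega⟩ : Fin 3)) = 2 from rfl] at hl' hs; linear_combination hl' + hs)
end

section
/- Let q > 0 be real and, for k = (k₁,k₂,k₃) ∈ ℝ³, let H_q(k) be the 2×2 complex matrix with entries H₁₁ = 4+q, H₁₂ = −1−e^{ik₁}−e^{ik₂}−e^{ik₃}, H₂₁ = −1−e^{−ik₁}−e^{−ik₂}−e^{−ik₃}, H₂₂ = 4−q. Then for every k ∈ ℝ³ the spectrum (over ℂ) of H_q(k) equals {4 − √(g(k)+q²), 4 + √(g(k)+q²)} where g(k) = |1+e^{ik₁}+e^{ik₂}+e^{ik₃}|², and ⋃_{k ∈ (−π,π]³} spectrum(H_q(k)) = [4−√(16+q²), 4−q] ∪ [4+q, 4+√(16+q²)] (real intervals regarded as subsets of ℂ). -/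
/-!
`H_q(k)` is the Hermitian matrix `!![4 + q, -w; -w̄, 4 - q]` with `w = 1 + ∑ⱼ e^{ikⱼ}`, whose
characteristic polynomial `(z - 4)² - q² - |w|²` has the roots `4 ± √(|w|² + q²)`. On the
Brillouin zone, `g = |w|²` is continuous on a connected set, is at most `16` by the triangle
inequality, and takes the values `0` at `(π, π, 0)` and `16` at `0`; so it fills `[0, 16]`, and
`t ↦ √(t + q²)` maps `[0, 16]` onto `[q, √(16 + q²)]`.
-/

open scoped Real

/-- The diamond-lattice symbol `g(k) = |1 + e^{ik₁} + e^{ik₂} + e^{ik₃}|²`. -/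
noncomputable def diamondSymbol (k₁ k₂ k₃ : ℝ) : ℝ :=
  ‖1 + Complex.exp (Complex.I * k₁) + Complex.exp (Complex.I * k₂) +
    Complex.exp (Complex.I * k₃)‖ ^ 2

/-- The Floquet matrix of the Schrödinger operator on the diamond lattice with
potential `±q` on the two fundamental vertices. -/
noncomputable def diamondFloquet (q k₁ k₂ k₃ : ℝ) : Matrix (Fin 2) (Fin 2) ℂ :=
  !![((4 + q : ℝ) : ℂ),
     -1 - Complex.exp (Complex.I * k₁) - Complex.exp (Complex.I * k₂) -
       Complex.exp (Complex.I * k₃);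
     -1 - Complex.exp (-(Complex.I * k₁)) - Complex.exp (-(Complex.I * k₂)) -
       Complex.exp (-(Complex.I * k₃)), ((4 - q : ℝ) : ℂ)]

open Complex Set

theorem Matrix.spectrum_hermitian_fin_two (m δ : ℝ) (w : ℂ) :
    spectrum ℂ !![((m + δ : ℝ) : ℂ), w; star w, ((m - δ : ℝ) : ℂ)] =
      {((m - √(‖w‖ ^ 2 + δ ^ 2) : ℝ) : ℂ), ((m + √(‖w‖ ^ 2 + δ ^ 2) : ℝ) : ℂ)} := by
  set s := √(‖w‖ ^ 2 + δ ^ 2)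
  have hs : (s : ℂ) ^ 2 = (‖w‖ : ℂ) ^ 2 + (δ : ℂ) ^ 2 := by
    exact_mod_cast Real.sq_sqrt (by positivity : 0 ≤ ‖w‖ ^ 2 + δ ^ 2)
  have hdet : ∀ z : ℂ,
      (algebraMap ℂ _ z - !![((m + δ : ℝ) : ℂ), w; star w, ((m - δ : ℝ) : ℂ)]).det =
        (z - (m - s : ℝ)) * (z - (m + s : ℝ)) := by
    intro z
    simp only [Matrix.det_fin_two, Matrix.sub_apply, Matrix.algebraMap_matrix_apply,
      Matrix.of_apply, Matrix.cons_val', Matrix.cons_val_zero, Matrix.cons_val_one,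
      Matrix.cons_val_fin_one, Algebra.algebraMap_self, RingHom.id_apply, ↓reduceIte,
      zero_ne_one, one_ne_zero, RCLike.star_def]
    push_cast
    linear_combination hs - mul_conj' w
  ext z
  rw [spectrum.mem_iff, Matrix.isUnit_iff_isUnit_det, isUnit_iff_ne_zero, not_not, hdet,
    mul_eq_zero, sub_eq_zero, sub_eq_zero, mem_insert_iff, mem_singleton_iff]

noncomputable def diamondSum (k₁ k₂ k₃ : ℝ) : ℂ :=
  1 + exp (I * k₁) + exp (I * k₂) + exp (I * k₃)

theorem diamondSymbol_eq_norm_sq (k₁ k₂ k₃ : ℝ) :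
    diamondSymbol k₁ k₂ k₃ = ‖diamondSum k₁ k₂ k₃‖ ^ 2 := rfl

theorem star_exp_I_mul_ofReal (k : ℝ) : star (exp (I * k)) = exp (-(I * k)) := by
  rw [star_def, ← exp_conj]
  simp

theorem diamondFloquet_eq (q k₁ k₂ k₃ : ℝ) :
    diamondFloquet q k₁ k₂ k₃ =
      !![((4 + q : ℝ) : ℂ), -diamondSum k₁ k₂ k₃;
        star (-diamondSum k₁ k₂ k₃), ((4 - q : ℝ) : ℂ)] := by
  simp only [diamondFloquet, diamondSum, star_neg, star_add, star_one, star_exp_I_mul_ofReal]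
  ring_nf

theorem spectrum_diamondFloquet (q k₁ k₂ k₃ : ℝ) :
    spectrum ℂ (diamondFloquet q k₁ k₂ k₃) =
      {((4 - √(diamondSymbol k₁ k₂ k₃ + q ^ 2) : ℝ) : ℂ),
       ((4 + √(diamondSymbol k₁ k₂ k₃ + q ^ 2) : ℝ) : ℂ)} := by
  rw [diamondFloquet_eq, Matrix.spectrum_hermitian_fin_two, norm_neg, diamondSymbol_eq_norm_sq]

theorem diamondSymbol_le (k₁ k₂ k₃ : ℝ) : diamondSymbol k₁ k₂ k₃ ≤ 16 := by
  have h : ‖diamondSum k₁ k₂ k₃‖ ≤ 4 := by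
    calc ‖diamondSum k₁ k₂ k₃‖
        ≤ ‖(1 : ℂ)‖ + ‖exp (I * k₁)‖ + ‖exp (I * k₂)‖ + ‖exp (I * k₃)‖ := norm_add₄_le
      _ = 4 := by simp only [norm_one, norm_exp_I_mul_ofReal]; norm_num
  rw [diamondSymbol_eq_norm_sq]
  nlinarith [norm_nonneg (diamondSum k₁ k₂ k₃)]

theorem continuous_diamondSymbol :
    Continuous fun k : ℝ × ℝ × ℝ => diamondSymbol k.1 k.2.1 k.2.2 := by
  unfold diamondSymbol
  fun_prop

theorem image_diamondSymbol_brillouinZone :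
    (fun k : ℝ × ℝ × ℝ => diamondSymbol k.1 k.2.1 k.2.2) ''
        (Ioc (-π) π ×ˢ Ioc (-π) π ×ˢ Ioc (-π) π) = Icc 0 16 := by
  have hπ : π ∈ Ioc (-π) π := ⟨by linarith [Real.pi_pos], le_rfl⟩
  have h0 : (0 : ℝ) ∈ Ioc (-π) π := ⟨by linarith [Real.pi_pos], Real.pi_pos.le⟩
  refine Subset.antisymm ?_ ?_
  · rintro _ ⟨k, -, rfl⟩
    exact ⟨sq_nonneg _, diamondSymbol_le _ _ _⟩
  · have hmin : diamondSymbol π π 0 = 0 := by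
      simp [diamondSymbol, mul_comm I, exp_pi_mul_I]
    have hmax : diamondSymbol 0 0 0 = 16 := by
      norm_num [diamondSymbol]
    have hzone : IsPreconnected (Ioc (-π) π ×ˢ Ioc (-π) π ×ˢ Ioc (-π) π) :=
      isPreconnected_Ioc.prod (isPreconnected_Ioc.prod isPreconnected_Ioc)
    simpa only [hmin, hmax] using hzone.intermediate_value (a := (π, π, 0)) (b := (0, 0, 0))
      ⟨hπ, hπ, h0⟩ ⟨h0, h0, h0⟩ continuous_diamondSymbol.continuousOn

theorem exists_brillouinZone_diamondSymbol_iff (P : ℝ → Prop) :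
    (∃ k₁ ∈ Ioc (-π) π, ∃ k₂ ∈ Ioc (-π) π, ∃ k₃ ∈ Ioc (-π) π, P (diamondSymbol k₁ k₂ k₃)) ↔
      ∃ t ∈ Icc 0 16, P t := by
  rw [← image_diamondSymbol_brillouinZone, exists_mem_image]
  simp only [Prod.exists, mem_prod, and_assoc, exists_and_left]

theorem image_sqrt_add_sq_Icc {q T : ℝ} (hq : 0 ≤ q) (hT : 0 ≤ T) :
    (fun t => √(t + q ^ 2)) '' Icc 0 T = Icc q √(T + q ^ 2) := by
  rw [ContinuousOn.image_Icc_of_monotoneOn hT (by fun_prop)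
    (fun x _ y _ hxy => Real.sqrt_le_sqrt (by linarith)), zero_add, Real.sqrt_sq hq]

theorem mem_Icc_union_Icc_iff {c a b x : ℝ} :
    x ∈ Icc (c - b) (c - a) ∪ Icc (c + a) (c + b) ↔ ∃ s ∈ Icc a b, x = c - s ∨ x = c + s := by
  constructor
  · rintro (⟨h₁, h₂⟩ | ⟨h₁, h₂⟩)
    · exact ⟨c - x, ⟨by linarith, by linarith⟩, Or.inl (by ring)⟩
    · exact ⟨x - c, ⟨by linarith, by linarith⟩, Or.inr (by ring)⟩
  · rintro ⟨s, ⟨h₁, h₂⟩, rfl | rfl⟩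
    · exact Or.inl ⟨by linarith, by linarith⟩
    · exact Or.inr ⟨by linarith, by linarith⟩

/-- the spectrum of the diamond Floquet matrix is
`{4 − √(g(k)+q²), 4 + √(g(k)+q²)}`, and the union over the Brillouin zone `(−π,π]³` is
`[4−√(16+q²), 4−q] ∪ [4+q, 4+√(16+q²)]`. -/
theorem stmt_18 (q : ℝ) (hq : 0 < q) :
    (∀ k₁ k₂ k₃ : ℝ, spectrum ℂ (diamondFloquet q k₁ k₂ k₃) =
      {((4 - Real.sqrt (diamondSymbol k₁ k₂ k₃ + q^2) : ℝ) : ℂ),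
       ((4 + Real.sqrt (diamondSymbol k₁ k₂ k₃ + q^2) : ℝ) : ℂ)}) ∧
    (⋃ k₁ ∈ Set.Ioc (-π) π, ⋃ k₂ ∈ Set.Ioc (-π) π, ⋃ k₃ ∈ Set.Ioc (-π) π,
        spectrum ℂ (diamondFloquet q k₁ k₂ k₃)) =
      (fun x : ℝ => (x : ℂ)) ''
        (Set.Icc (4 - Real.sqrt (16 + q^2)) (4 - q) ∪
         Set.Icc (4 + q) (4 + Real.sqrt (16 + q^2))) := by
  refine ⟨spectrum_diamondFloquet q, ?_⟩
  simp only [spectrum_diamondFloquet, ← image_pair, ← image_iUnion₂]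
  congr 1
  ext x
  simp only [mem_iUnion, mem_insert_iff, mem_singleton_iff, exists_prop]
  rw [exists_brillouinZone_diamondSymbol_iff (fun t => x = 4 - √(t + q ^ 2) ∨ x = 4 + √(t + q ^ 2)),
    mem_Icc_union_Icc_iff, ← image_sqrt_add_sq_Icc hq.le (by norm_num), exists_mem_image]
end

section
/- (a) For every t = (t₁,t₂,t₃) ∈ ℤ³ there exists k ∈ ℝ³ with 1 + e^{ik₁} + e^{ik₂} + e^{ik₃} = 0 and t₁k₁ + t₂k₂ + t₃k₃ ∈ 2πℤ. (b) For all t = (t₁,t₂,t₃) ∈ ℤ³ and s = (s₁,s₂,s₃) ∈ ℤ³: there exists k ∈ ℝ³ with 1 + e^{ik₁} + e^{ik₂} + e^{ik₃} = 0, t₁k₁ + t₂k₂ + t₃k₃ ∈ 2πℤ and s₁k₁ + s₂k₂ + s₃k₃ ∈ 2πℤ if and only if there exist indices i ≠ j in {1,2,3} such that t_i + t_j and s_i + s_j are both even. -/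
open scoped Real BigOperators

lemma evenZ_aux (n : ℤ) : Even n ↔ ((n : ZMod 2) = 0) := by
  rw [ZMod.intCast_zmod_eq_zero_iff_dvd, Int.even_iff, Int.dvd_iff_emod_eq_zero]
  norm_num

lemma zkey_aux : ∀ a b u v : ZMod 2, b*u - a*v = 0 →
    (a = 0 ∧ b = 0) ∨ (u = 0 ∧ v = 0) ∨ (a + u = 0 ∧ b + v = 0) := by decide

lemma exp_pair_aux (a b : ℝ) (h : Complex.exp (Complex.I*b) = - Complex.exp (Complex.I*a)) :
    ∃ q : ℤ, b = a + π + 2*π*q := by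
  have h1 : Complex.exp (Complex.I*b - Complex.I*a - π*Complex.I) = 1 := by
    rw [Complex.exp_sub, Complex.exp_sub, h, Complex.exp_pi_mul_I]
    field_simp [Complex.exp_ne_zero]
  obtain ⟨q, hq⟩ := Complex.exp_eq_one_iff.mp h1
  have h2 : ((b - a - π : ℝ):ℂ) * Complex.I = ((2*π*q : ℝ):ℂ) * Complex.I := by
    push_cast; linear_combination hq
  have h3 := mul_right_cancel₀ Complex.I_ne_zero h2
  have h4 : b - a - π = 2*π*q := by exact_mod_cast h3
  exact ⟨q, by linarith⟩

lemma conj_exp_aux (x : ℝ) : (starRingEnd ℂ) (Complex.exp (Complex.I * x)) =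
    (Complex.exp (Complex.I * x))⁻¹ := by
  rw [← Complex.exp_conj, ← Complex.exp_neg]
  congr 1
  simp [map_mul, Complex.conj_I, Complex.conj_ofReal]

lemma fwd_aux (ta tb tc sa sb sc : ℤ) (ka kb kc : ℝ)
    (hc : Complex.exp (Complex.I * kc) = -1)
    (hb : Complex.exp (Complex.I * kb) = - Complex.exp (Complex.I * ka))
    (ht : ∃ n : ℤ, (ta:ℝ)*ka + tb*kb + tc*kc = 2*π*n)
    (hs : ∃ n : ℤ, (sa:ℝ)*ka + sb*kb + sc*kc = 2*π*n) :
    (Even (ta+tb) ∧ Even (sa+sb)) ∨ (Even (tb+tc) ∧ Even (sb+sc)) ∨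
      (Even (ta+tc) ∧ Even (sa+sc)) := by
  obtain ⟨p, hp⟩ : ∃ p : ℤ, kc = 0 + π + 2*π*p := by
    refine exp_pair_aux 0 kc ?_
    simpa using hc
  obtain ⟨q, hq⟩ := exp_pair_aux ka kb hb
  obtain ⟨n, hn⟩ := ht
  obtain ⟨m, hm⟩ := hs
  rw [hp, hq] at hn hm
  have hA : ((ta:ℝ)+tb) * ka = π * (2*((n:ℝ) - tb*q - tc*p) - ((tb:ℝ)+tc)) := by
    linear_combination hn
  have hB : ((sa:ℝ)+sb) * ka = π * (2*((m:ℝ) - sb*q - sc*p) - ((sb:ℝ)+sc)) := by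
    linear_combination hm
  have hPi : π * (((sa:ℝ)+sb) * (2*((n:ℝ) - tb*q - tc*p) - ((tb:ℝ)+tc)))
      = π * (((ta:ℝ)+tb) * (2*((m:ℝ) - sb*q - sc*p) - ((sb:ℝ)+sc))) := by
    linear_combination ((ta:ℝ)+tb) * hB - ((sa:ℝ)+sb) * hA
  have hR := mul_left_cancel₀ Real.pi_ne_zero hPi
  have hZ : (sa+sb) * (2*(n - tb*q - tc*p) - (tb+tc))
      = (ta+tb) * (2*(m - sb*q - sc*p) - (sb+sc)) := by exact_mod_cast hR
  have h2 : (sa+sb)*(tb+tc) - (ta+tb)*(sb+sc)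
      = 2*((sa+sb)*(n - tb*q - tc*p) - (ta+tb)*(m - sb*q - sc*p)) := by
    linear_combination -hZ
  have cast2 : ∀ x : ℤ, ((x:ZMod 2)) + (x:ZMod 2) = 0 := by
    intro x
    have hx : ((2*x : ℤ) : ZMod 2) = 0 := by
      rw [ZMod.intCast_zmod_eq_zero_iff_dvd]
      exact ⟨x, by push_cast; ring⟩
    push_cast at hx
    linear_combination hx
  have hz2 : ((sa:ZMod 2)+sb)*((tb:ZMod 2)+tc) - ((ta:ZMod 2)+tb)*((sb:ZMod 2)+sc) = 0 := by
    have h3 : (((sa+sb)*(tb+tc) - (ta+tb)*(sb+sc) : ℤ) : ZMod 2) = 0 := by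
      rw [h2]
      push_cast
      rw [show (2 : ZMod 2) = 0 by decide]
      ring
    push_cast at h3
    linear_combination h3
  rcases zkey_aux ((ta:ZMod 2)+tb) ((sa:ZMod 2)+sb) ((tb:ZMod 2)+tc) ((sb:ZMod 2)+sc) hz2
    with ⟨h1', h2'⟩ | ⟨h1', h2'⟩ | ⟨h1', h2'⟩
  · exact Or.inl ⟨(evenZ_aux _).mpr (by push_cast; linear_combination h1'),
      (evenZ_aux _).mpr (by push_cast; linear_combination h2')⟩
  · exact Or.inr (Or.inl ⟨(evenZ_aux _).mpr (by push_cast; linear_combination h1'),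
      (evenZ_aux _).mpr (by push_cast; linear_combination h2')⟩)
  · exact Or.inr (Or.inr ⟨(evenZ_aux _).mpr (by push_cast; linear_combination h1' - cast2 tb),
      (evenZ_aux _).mpr (by push_cast; linear_combination h2' - cast2 sb)⟩)

lemma build_aux (t s : Fin 3 → ℤ) (i j : Fin 3) (hij : i ≠ j)
    (ht : Even (t i + t j)) (hs : Even (s i + s j)) :
    ∃ k : Fin 3 → ℝ, 1 + ∑ m, Complex.exp (Complex.I * k m) = 0 ∧
      (∃ n : ℤ, ∑ m, (t m : ℝ) * k m = 2*π*n) ∧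
      (∃ n : ℤ, ∑ m, (s m : ℝ) * k m = 2*π*n) := by
  obtain ⟨A, hA⟩ := ht
  obtain ⟨B, hB⟩ := hs
  have hzero : ∀ (a b : ℤ) (C : ℤ), a + b = C + C → (a:ℝ)*π + (b:ℝ)*π = 2*π*C := by
    intro a b C h
    have : ((a:ℝ) + b) = 2*C := by exact_mod_cast (by omega : a + b = 2*C)
    linear_combination π * this
  have hexp : Complex.exp (Complex.I * ((π:ℝ):ℂ)) = -1 := by
    rw [mul_comm]; exact_mod_cast Complex.exp_pi_mul_I
  have hexp0 : Complex.exp (Complex.I * ((0:ℝ):ℂ)) = 1 := by simp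
  fin_cases i <;> fin_cases j
  any_goals exact absurd rfl hij
  · refine ⟨![π, π, 0], ?_, ⟨A, ?_⟩, ⟨B, ?_⟩⟩
    · rw [Fin.sum_univ_three]; simp [hexp, hexp0]
    · rw [Fin.sum_univ_three]
      simpa using hzero (t 0) (t 1) A (show t 0 + t 1 = A + A from hA)
    · rw [Fin.sum_univ_three]
      simpa using hzero (s 0) (s 1) B (show s 0 + s 1 = B + B from hB)
  · refine ⟨![π, 0, π], ?_, ⟨A, ?_⟩, ⟨B, ?_⟩⟩
    · rw [Fin.sum_univ_three]; simp [hexp, hexp0]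
    · rw [Fin.sum_univ_three]
      simpa using hzero (t 0) (t 2) A (show t 0 + t 2 = A + A from hA)
    · rw [Fin.sum_univ_three]
      simpa using hzero (s 0) (s 2) B (show s 0 + s 2 = B + B from hB)
  · refine ⟨![π, π, 0], ?_, ⟨A, ?_⟩, ⟨B, ?_⟩⟩
    · rw [Fin.sum_univ_three]; simp [hexp, hexp0]
    · rw [Fin.sum_univ_three]
      have h := show t 1 + t 0 = A + A from hA
      simpa using hzero (t 0) (t 1) A (by omega)
    · rw [Fin.sum_univ_three]
      have h := show s 1 + s 0 = B + B from hB
      simpa using hzero (s 0) (s 1) B (by omega)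
  · refine ⟨![0, π, π], ?_, ⟨A, ?_⟩, ⟨B, ?_⟩⟩
    · rw [Fin.sum_univ_three]; simp [hexp, hexp0]
    · rw [Fin.sum_univ_three]
      simpa using hzero (t 1) (t 2) A (show t 1 + t 2 = A + A from hA)
    · rw [Fin.sum_univ_three]
      simpa using hzero (s 1) (s 2) B (show s 1 + s 2 = B + B from hB)
  · refine ⟨![π, 0, π], ?_, ⟨A, ?_⟩, ⟨B, ?_⟩⟩
    · rw [Fin.sum_univ_three]; simp [hexp, hexp0]
    · rw [Fin.sum_univ_three]
      have h := show t 2 + t 0 = A + A from hA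
      simpa using hzero (t 0) (t 2) A (by omega)
    · rw [Fin.sum_univ_three]
      have h := show s 2 + s 0 = B + B from hB
      simpa using hzero (s 0) (s 2) B (by omega)
  · refine ⟨![0, π, π], ?_, ⟨A, ?_⟩, ⟨B, ?_⟩⟩
    · rw [Fin.sum_univ_three]; simp [hexp, hexp0]
    · rw [Fin.sum_univ_three]
      have h := show t 2 + t 1 = A + A from hA
      simpa using hzero (t 1) (t 2) A (by omega)
    · rw [Fin.sum_univ_three]
      have h := show s 2 + s 1 = B + B from hB
      simpa using hzero (s 1) (s 2) B (by omega)


/-- (a) for every `t ∈ ℤ³` the zero set of `1+e^{ik₁}+e^{ik₂}+e^{ik₃}`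
meets `{k : ⟨t,k⟩ ∈ 2πℤ}`; (b) for `t, s ∈ ℤ³` it meets
`{k : ⟨t,k⟩ ∈ 2πℤ and ⟨s,k⟩ ∈ 2πℤ}` iff `t_i + t_j` and `s_i + s_j` are both even for
some pair of distinct indices `i ≠ j`. -/
theorem stmt_19 :
    (∀ t : Fin 3 → ℤ, ∃ k : Fin 3 → ℝ,
      1 + ∑ m, Complex.exp (Complex.I * k m) = 0 ∧
      ∃ n : ℤ, ∑ m, (t m : ℝ) * k m = 2*π*n) ∧
    (∀ t s : Fin 3 → ℤ,
      ((∃ k : Fin 3 → ℝ,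
          1 + ∑ m, Complex.exp (Complex.I * k m) = 0 ∧
          (∃ n : ℤ, ∑ m, (t m : ℝ) * k m = 2*π*n) ∧
          (∃ n : ℤ, ∑ m, (s m : ℝ) * k m = 2*π*n)) ↔
        ∃ i j : Fin 3, i ≠ j ∧ Even (t i + t j) ∧ Even (s i + s j))) := by
  have pair_exists : ∀ t : Fin 3 → ℤ, ∃ i j : Fin 3, i ≠ j ∧ Even (t i + t j) := by
    intro t
    by_cases h01 : Even (t 0 + t 1)
    · exact ⟨0, 1, by decide, h01⟩
    by_cases h02 : Even (t 0 + t 2)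
    · exact ⟨0, 2, by decide, h02⟩
    refine ⟨1, 2, by decide, ?_⟩
    rw [Int.even_iff] at *
    omega
  constructor
  · intro t
    obtain ⟨i, j, hij, hE⟩ := pair_exists t
    obtain ⟨k, h1, h2, _⟩ := build_aux t t i j hij hE hE
    exact ⟨k, h1, h2⟩
  · intro t s
    constructor
    · rintro ⟨k, hzero, hT, hS⟩
      rw [Fin.sum_univ_three] at hzero hT hS
      set w0 := Complex.exp (Complex.I * (k 0 : ℂ)) with hw0
      set w1 := Complex.exp (Complex.I * (k 1 : ℂ)) with hw1
      set w2 := Complex.exp (Complex.I * (k 2 : ℂ)) with hw2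
      have hinv : 1 + (w0⁻¹ + w1⁻¹ + w2⁻¹) = 0 := by
        have hcj := congrArg (starRingEnd ℂ) hzero
        rw [hw0, hw1, hw2]
        simpa [map_add, conj_exp_aux, hw0, hw1, hw2] using hcj
      have e2 : w1*w2 + w0*w2 + w0*w1 + w0*w1*w2 = 0 := by
        have h := hinv
        field_simp [Complex.exp_ne_zero, hw0, hw1, hw2] at h
        linear_combination h
      have hprod : (1+w0)*(1+w1)*(1+w2) = 0 := by linear_combination hzero + e2
      have hT' : ∀ a b c : Fin 3,
          (t a : ℝ)*k a + t b*k b + t c*k c = (t 0 : ℝ)*k 0 + t 1*k 1 + t 2*k 2 →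
          (s a : ℝ)*k a + s b*k b + s c*k c = (s 0 : ℝ)*k 0 + s 1*k 1 + s 2*k 2 → True :=
        fun _ _ _ _ _ => trivial
      rcases mul_eq_zero.mp hprod with h12 | h3
      · rcases mul_eq_zero.mp h12 with h1 | h2
        · -- w0 = -1, w2 = -w1
          have hc : w0 = -1 := by linear_combination h1
          have hb : w2 = -w1 := by linear_combination hzero - h1
          obtain ⟨nT, hnT⟩ := hT
          obtain ⟨nS, hnS⟩ := hS
          rcases fwd_aux (t 1) (t 2) (t 0) (s 1) (s 2) (s 0) (k 1) (k 2) (k 0) hc hb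
            ⟨nT, by linarith⟩ ⟨nS, by linarith⟩ with ⟨e1, e2'⟩ | ⟨e1, e2'⟩ | ⟨e1, e2'⟩
          · exact ⟨1, 2, by decide, e1, e2'⟩
          · exact ⟨2, 0, by decide, e1, e2'⟩
          · exact ⟨1, 0, by decide, e1, e2'⟩
        · -- w1 = -1, w2 = -w0
          have hc : w1 = -1 := by linear_combination h2
          have hb : w2 = -w0 := by linear_combination hzero - h2
          obtain ⟨nT, hnT⟩ := hT
          obtain ⟨nS, hnS⟩ := hS
          rcases fwd_aux (t 0) (t 2) (t 1) (s 0) (s 2) (s 1) (k 0) (k 2) (k 1) hc hb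
            ⟨nT, by linarith⟩ ⟨nS, by linarith⟩ with ⟨e1, e2'⟩ | ⟨e1, e2'⟩ | ⟨e1, e2'⟩
          · exact ⟨0, 2, by decide, e1, e2'⟩
          · exact ⟨2, 1, by decide, e1, e2'⟩
          · exact ⟨0, 1, by decide, e1, e2'⟩
      · -- w2 = -1, w1 = -w0
        have hc : w2 = -1 := by linear_combination h3
        have hb : w1 = -w0 := by linear_combination hzero - h3
        obtain ⟨nT, hnT⟩ := hT
        obtain ⟨nS, hnS⟩ := hS
        rcases fwd_aux (t 0) (t 1) (t 2) (s 0) (s 1) (s 2) (k 0) (k 1) (k 2) hc hb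
          ⟨nT, by linarith⟩ ⟨nS, by linarith⟩ with ⟨e1, e2'⟩ | ⟨e1, e2'⟩ | ⟨e1, e2'⟩
        · exact ⟨0, 1, by decide, e1, e2'⟩
        · exact ⟨1, 2, by decide, e1, e2'⟩
        · exact ⟨0, 2, by decide, e1, e2'⟩
    · rintro ⟨i, j, hij, ht, hs⟩
      exact build_aux t s i j hij ht hs
end
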